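/- Let m ≥ 2, τ ∈ S_m, and suppose that the ratios |S_{n+1}(τ)|/|S_n(τ)| converge as n → ∞ to a limit L > 0. Fix l ≥ 2 and let {k_n} be any sequence with 1 ≤ k_n ≤ n-l+1. Then limsup_{n→∞} |A^{(n)}_{l;k_n} ∩ S_n(τ)| / |S_n(τ)| ≤ |S_l(τ)| / L^{l-1}. -/

import Mathlib

open Filter

def Contains {n m : ℕ} (σ : Fin n → Fin n) (τ : Fin m → Fin m) : Prop :=
  ∃ f : Fin m → Fin n, StrictMono f ∧ ∀ j k : Fin m, σ (f j) < σ (f k) ↔ τ j < τ k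

def Avoids {n m : ℕ} (σ : Fin n → Fin n) (τ : Fin m → Fin m) : Prop :=
  ¬ Contains σ τ

def AvoidSet (n : ℕ) {m : ℕ} (τ : Equiv.Perm (Fin m)) : Set (Equiv.Perm (Fin n)) :=
  {σ : Equiv.Perm (Fin n) | Avoids ⇑σ ⇑τ}

def ClusterAt {n : ℕ} (l k a : ℕ) (σ : Equiv.Perm (Fin n)) : Prop :=
  (Finset.univ.filter fun i : Fin n => a ≤ (i : ℕ) + 1 ∧ (i : ℕ) + 1 < a + l).image
      (fun i => (σ i : ℕ) + 1) = Finset.Ico k (k + l)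

def ClusterEvent (n l k : ℕ) : Set (Equiv.Perm (Fin n)) :=
  {σ : Equiv.Perm (Fin n) | ∃ a : ℕ, 1 ≤ a ∧ a ≤ n - l + 1 ∧ ClusterAt l k a σ}

def ClusterFree {m : ℕ} (τ : Equiv.Perm (Fin m)) : Prop :=
  ∀ l a k : ℕ, 2 ≤ l → l ≤ m - 1 → 1 ≤ a → a + l ≤ m + 1 → ¬ ClusterAt l k a τ

def ContainsTightly12 {m : ℕ} (τ : Equiv.Perm (Fin m)) : Prop :=
  ∃ i j : Fin m, (j : ℕ) = (i : ℕ) + 1 ∧ (τ j : ℕ) = (τ i : ℕ) + 1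

def ContainsTightly21 {m : ℕ} (τ : Equiv.Perm (Fin m)) : Prop :=
  ∃ i j : Fin m, (j : ℕ) = (i : ℕ) + 1 ∧ (τ i : ℕ) = (τ j : ℕ) + 1

def perm123 : Equiv.Perm (Fin 3) := Equiv.refl (Fin 3)

def perm321 : Equiv.Perm (Fin 3) :=
  ⟨![2, 1, 0], ![2, 1, 0], by intro x; fin_cases x <;> rfl, by intro x; fin_cases x <;> rfl⟩

def p2413 : Equiv.Perm (Fin 4) :=
  ⟨![1, 3, 0, 2], ![2, 0, 3, 1], by intro x; fin_cases x <;> rfl, by intro x; fin_cases x <;> rfl⟩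

def p3142 : Equiv.Perm (Fin 4) :=
  ⟨![2, 0, 3, 1], ![1, 3, 0, 2], by intro x; fin_cases x <;> rfl, by intro x; fin_cases x <;> rfl⟩

def SepSet (n : ℕ) : Set (Equiv.Perm (Fin n)) :=
  {σ : Equiv.Perm (Fin n) | Avoids ⇑σ ⇑p2413 ∧ Avoids ⇑σ ⇑p3142}

open Topology Function Equiv

/-! If the positions `[a, a + l)` of `σ ∈ S_n` carry the values `[k, k + l)`, then `σ` is
determined by the pattern of this block, in `S_l`, together with the permutation of
`S_{n-l+1}` obtained by collapsing the block to a single entry `k` at position `a` (which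
recovers `a`). Both are patterns of `σ`, so they avoid `τ` when `σ` does, whence
`|A_{l;k} ∩ S_n(τ)| ≤ |S_l(τ)| |S_{n-l+1}(τ)|`. Dividing by `|S_n(τ)|` and using
`|S_{n-l+1}(τ)| / |S_n(τ)| → L^{-(l-1)}` gives the bound on the limsup. -/

section Patterns

variable {n p m : ℕ} {σ : Fin n → Fin n} {ρ : Fin p → Fin p} {τ : Fin m → Fin m}

theorem Contains.trans (hσ : Contains σ ρ) (hρ : Contains ρ τ) : Contains σ τ := by
  obtain ⟨f, hf, hfσ⟩ := hσ
  obtain ⟨g, hg, hgρ⟩ := hρ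
  exact ⟨f ∘ g, hf.comp hg, fun i j => (hfσ (g i) (g j)).trans (hgρ i j)⟩

theorem Contains.avoids_of_avoids (hσρ : Contains σ ρ) (hσ : Avoids σ τ) : Avoids ρ τ :=
  fun hρ => hσ (hσρ.trans hρ)

theorem Contains.injective (hσρ : Contains σ ρ) (hσ : Injective σ) : Injective ρ := by
  obtain ⟨f, hf, hfρ⟩ := hσρ
  intro i j hij
  refine hf.injective (hσ (le_antisymm (not_lt.1 fun hlt => ?_) (not_lt.1 fun hlt => ?_)))
  · exact ((hfρ j i).1 hlt).ne hij.symm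
  · exact ((hfρ i j).1 hlt).ne hij

theorem contains_of_strictMonoOn {e : Fin p → Fin n} (he : StrictMono e) {g : ℕ → ℕ}
    (hg : StrictMonoOn g (Set.range fun i => (σ (e i) : ℕ)))
    (hρ : ∀ i, (ρ i : ℕ) = g (σ (e i))) : Contains σ ρ :=
  ⟨e, he, fun i j => by rw [Fin.lt_def, Fin.lt_def, hρ, hρ, hg.lt_iff_lt ⟨i, rfl⟩ ⟨j, rfl⟩]⟩

end Patterns

theorem avoidSet_nonempty {m : ℕ} (hm : 2 ≤ m) (τ : Perm (Fin m)) (n : ℕ) :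
    (AvoidSet n τ).Nonempty := by
  by_cases hτ : StrictMono τ
  · refine ⟨Fin.revPerm, fun ⟨f, hf, hfτ⟩ => ?_⟩
    have h01 : (⟨0, by omega⟩ : Fin m) < ⟨1, by omega⟩ := Fin.mk_lt_mk.2 zero_lt_one
    have hrev := (hfτ _ _).2 (hτ h01)
    rw [Fin.revPerm_apply, Fin.revPerm_apply, Fin.rev_lt_rev] at hrev
    exact (hf h01).not_gt hrev
  · refine ⟨1, fun ⟨f, hf, hfτ⟩ => hτ fun i j hij => ?_⟩
    exact (hfτ i j).1 (hf hij)

section Block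

variable {n n' l a k : ℕ} {σ : Perm (Fin n)}

/-- The 0-indexed form of `ClusterAt`. -/
def IsBlock (l a k : ℕ) (σ : Perm (Fin n)) : Prop :=
  ∀ i : Fin n, (a ≤ i ∧ (i : ℕ) < a + l) ↔ (k ≤ σ i ∧ (σ i : ℕ) < k + l)

theorem ClusterAt.isBlock (h : ClusterAt l k a σ) (ha : 1 ≤ a) (hk : 1 ≤ k) :
    IsBlock l (a - 1) (k - 1) σ := by
  intro i
  have hmem := fun v => Finset.ext_iff.1 h v
  simp only [Finset.mem_image, Finset.mem_filter, Finset.mem_univ, true_and,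
    Finset.mem_Ico] at hmem
  constructor
  · intro hi
    have := (hmem (σ i + 1)).1 ⟨i, by omega, rfl⟩
    omega
  · intro hv
    obtain ⟨i', hi', he⟩ := (hmem (σ i + 1)).2 (by omega)
    obtain rfl : i' = i := σ.injective (Fin.ext (by omega))
    omega

theorem exists_isBlock_of_mem_clusterEvent (h : σ ∈ ClusterEvent n l k) (hln : l ≤ n)
    (hk : 1 ≤ k) : ∃ a, a + l ≤ n ∧ IsBlock l a (k - 1) σ :=
  let ⟨a, ha, han, hσ⟩ := h
  ⟨a - 1, by omega, hσ.isBlock ha hk⟩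

def blockEmb (ha : a + l ≤ n) : Fin l → Fin n :=
  Fin.castLE ha ∘ Fin.natAdd a

@[simp]
theorem val_blockEmb (ha : a + l ≤ n) (i : Fin l) : (blockEmb ha i : ℕ) = a + i := rfl

def blockFun (hσ : IsBlock l a k σ) (ha : a + l ≤ n) (i : Fin l) : Fin l :=
  ⟨σ (blockEmb ha i) - k, by have := (hσ (blockEmb ha i)).1 (by simp); omega⟩

theorem contains_blockFun (hσ : IsBlock l a k σ) (ha : a + l ≤ n) :
    Contains σ (blockFun hσ ha) := by
  refine contains_of_strictMonoOn (e := blockEmb ha)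
    ((Fin.strictMono_castLE ha).comp (Fin.strictMono_natAdd a)) (g := (· - k)) ?_ fun _ => rfl
  rintro _ ⟨i, rfl⟩ _ ⟨j, rfl⟩ hij
  have := (hσ (blockEmb ha i)).1 (by simp)
  have := (hσ (blockEmb ha j)).1 (by simp)
  simp only at hij ⊢
  omega

/-- The block `[a, a + l)` of positions collapses to the single position `a`. -/
def collapseEmb (a : ℕ) (hl : 0 < l) (hn : n' + l = n + 1) (j : Fin n') : Fin n :=
  ⟨if (j : ℕ) ≤ a then j else j + (l - 1), by split <;> omega⟩

theorem strictMono_collapseEmb (hl : 0 < l) (hn : n' + l = n + 1) :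
    StrictMono (collapseEmb a hl hn) := by
  intro i j hij
  simp only [collapseEmb, Fin.lt_def] at hij ⊢
  split_ifs <;> omega

theorem mem_block_collapseEmb_iff (hl : 0 < l) (hn : n' + l = n + 1) (j : Fin n') :
    (a ≤ collapseEmb a hl hn j ∧ (collapseEmb a hl hn j : ℕ) < a + l) ↔ (j : ℕ) = a := by
  simp only [collapseEmb]
  split_ifs <;> omega

/-- The block `[k, k + l)` of values collapses to the single value `k`. -/
def collapseVal (k l v : ℕ) : ℕ :=
  if v < k then v else if v < k + l then k else v - (l - 1)

theorem collapseVal_strictMonoOn {S : Set ℕ} (hS : (S ∩ Set.Ico k (k + l)).Subsingleton) :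
    StrictMonoOn (collapseVal k l) S := by
  intro x hx y hy hxy
  have hxy' : k ≤ x → x < k + l → k ≤ y → y < k + l → x = y := fun h₁ h₂ h₃ h₄ =>
    hS ⟨hx, h₁, h₂⟩ ⟨hy, h₃, h₄⟩
  unfold collapseVal
  split_ifs <;> omega

def collapseFun (σ : Perm (Fin n)) (a k : ℕ) (hl : 0 < l) (hn : n' + l = n + 1)
    (hk : k + l ≤ n) (j : Fin n') : Fin n' :=
  ⟨collapseVal k l (σ (collapseEmb a hl hn j)), by
    have := (σ (collapseEmb a hl hn j)).isLt
    unfold collapseVal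
    split_ifs <;> omega⟩

variable (hl : 0 < l) (hn : n' + l = n + 1) (hk : k + l ≤ n)

theorem contains_collapseFun (hσ : IsBlock l a k σ) :
    Contains σ (collapseFun σ a k hl hn hk) := by
  refine contains_of_strictMonoOn (strictMono_collapseEmb hl hn)
    (collapseVal_strictMonoOn ?_) fun j => rfl
  rintro _ ⟨⟨i, rfl⟩, hi⟩ _ ⟨⟨j, rfl⟩, hj⟩
  have hi' := (mem_block_collapseEmb_iff hl hn i).1 ((hσ _).2 hi)
  have hj' := (mem_block_collapseEmb_iff hl hn j).1 ((hσ _).2 hj)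
  obtain rfl : i = j := Fin.ext (hi'.trans hj'.symm)
  rfl

theorem collapseFun_eq_iff (hσ : IsBlock l a k σ) (j : Fin n') :
    (collapseFun σ a k hl hn hk j : ℕ) = k ↔ (j : ℕ) = a := by
  rw [← mem_block_collapseEmb_iff (a := a) hl hn, hσ]
  simp only [collapseFun, collapseVal]
  split_ifs <;> omega

theorem IsBlock.eq_of_blockFun_eq_of_collapseFun_eq {σ₁ σ₂ : Perm (Fin n)} {a₁ a₂ : ℕ}
    (h₁ : IsBlock l a₁ k σ₁) (h₂ : IsBlock l a₂ k σ₂) (ha₁ : a₁ + l ≤ n) (ha₂ : a₂ + l ≤ n)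
    (hβ : blockFun h₁ ha₁ = blockFun h₂ ha₂)
    (hπ : collapseFun σ₁ a₁ k hl hn hk = collapseFun σ₂ a₂ k hl hn hk) : σ₁ = σ₂ := by
  obtain rfl : a₁ = a₂ := by
    have hπa := congrArg Fin.val (congrFun hπ ⟨a₁, by omega⟩)
    rw [(collapseFun_eq_iff hl hn hk h₁ _).2 rfl] at hπa
    exact (collapseFun_eq_iff hl hn hk h₂ _).1 hπa.symm
  ext i
  by_cases hi : a₁ ≤ i ∧ (i : ℕ) < a₁ + l
  · have hβi := congrArg Fin.val (congrFun hβ ⟨i - a₁, by omega⟩)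
    have he : blockEmb ha₁ ⟨i - a₁, by omega⟩ = i := Fin.ext (by simp only [val_blockEmb]; omega)
    simp only [blockFun, he] at hβi
    have := (h₁ i).1 hi
    have := (h₂ i).1 hi
    omega
  · let j : Fin n' := ⟨if (i : ℕ) < a₁ then i else i - (l - 1), by split <;> omega⟩
    have he : collapseEmb a₁ hl hn j = i :=
      Fin.ext (by simp only [collapseEmb, j]; split_ifs <;> omega)
    have hπi := congrArg Fin.val (congrFun hπ j)
    simp only [collapseFun, he, collapseVal] at hπi
    have := (h₁ i).not.1 hi
    have := (h₂ i).not.1 hi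
    split_ifs at hπi <;> omega

end Block

section Code

variable {n n' l k m : ℕ}

noncomputable def blockPerm {a : ℕ} {σ : Perm (Fin n)} (hσ : IsBlock l a k σ)
    (ha : a + l ≤ n) : Perm (Fin l) :=
  Equiv.ofBijective _
    (Finite.injective_iff_bijective.1 ((contains_blockFun hσ ha).injective σ.injective))

noncomputable def collapsePerm (hl : 0 < l) (hn : n' + l = n + 1) (hk : k + l ≤ n) {a : ℕ}
    {σ : Perm (Fin n)} (hσ : IsBlock l a k σ) : Perm (Fin n') :=
  Equiv.ofBijective _ (Finite.injective_iff_bijective.1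
    ((contains_collapseFun hl hn hk hσ).injective σ.injective))

open Classical in
/-- The value `1` is junk: the code is only used on permutations having such a block. -/
noncomputable def clusterCode (hl : 0 < l) (hn : n' + l = n + 1) (hk : k + l ≤ n)
    (σ : Perm (Fin n)) : Perm (Fin l) × Perm (Fin n') :=
  if h : ∃ a, a + l ≤ n ∧ IsBlock l a k σ then
    (blockPerm h.choose_spec.2 h.choose_spec.1, collapsePerm hl hn hk h.choose_spec.2)
  else 1

variable (hl : 0 < l) (hn : n' + l = n + 1) (hk : k + l ≤ n)

theorem clusterCode_mem_avoidSet_prod {τ : Perm (Fin m)} {σ : Perm (Fin n)}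
    (hσ : ∃ a, a + l ≤ n ∧ IsBlock l a k σ) (hστ : σ ∈ AvoidSet n τ) :
    clusterCode hl hn hk σ ∈ AvoidSet l τ ×ˢ AvoidSet n' τ := by
  rw [clusterCode, dif_pos hσ]
  exact ⟨(contains_blockFun hσ.choose_spec.2 _).avoids_of_avoids hστ,
    (contains_collapseFun hl hn hk hσ.choose_spec.2).avoids_of_avoids hστ⟩

theorem injOn_clusterCode :
    Set.InjOn (clusterCode hl hn hk) {σ | ∃ a, a + l ≤ n ∧ IsBlock l a k σ} := by
  rintro σ₁ (h₁ : ∃ a, _) σ₂ (h₂ : ∃ a, _) h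
  rw [clusterCode, clusterCode, dif_pos h₁, dif_pos h₂, Prod.mk.injEq] at h
  exact IsBlock.eq_of_blockFun_eq_of_collapseFun_eq hl hn hk h₁.choose_spec.2 h₂.choose_spec.2 _ _
    (congrArg DFunLike.coe h.1) (congrArg DFunLike.coe h.2)

end Code

theorem ncard_clusterEvent_inter_avoidSet_le {n l k m : ℕ} (τ : Perm (Fin m)) (hl : 0 < l)
    (hln : l ≤ n) (hk : 1 ≤ k) (hkn : k ≤ n - l + 1) :
    (ClusterEvent n l k ∩ AvoidSet n τ).ncard ≤
      (AvoidSet l τ).ncard * (AvoidSet (n - l + 1) τ).ncard := by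
  have hblock : ∀ σ ∈ ClusterEvent n l k ∩ AvoidSet n τ, ∃ a, a + l ≤ n ∧ IsBlock l a (k - 1) σ :=
    fun σ hσ => exists_isBlock_of_mem_clusterEvent hσ.1 hln hk
  have hn : n - l + 1 + l = n + 1 := by omega
  have hk' : k - 1 + l ≤ n := by omega
  rw [← Set.ncard_prod]
  exact Set.ncard_le_ncard_of_injOn (clusterCode hl hn hk')
    (fun σ hσ => clusterCode_mem_avoidSet_prod hl hn hk' (hblock σ hσ) hσ.2)
    ((injOn_clusterCode hl hn hk').mono hblock)

theorem tendsto_div_add_of_tendsto_succ_div {K : Type*} [Field K] [TopologicalSpace K]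
    [ContinuousMul K] {a : ℕ → K} (ha : ∀ n, a n ≠ 0) {L : K}
    (h : Tendsto (fun n => a (n + 1) / a n) atTop (𝓝 L)) (q : ℕ) :
    Tendsto (fun n => a (n + q) / a n) atTop (𝓝 (L ^ q)) := by
  induction q with
  | zero => simpa [div_self (ha _)] using tendsto_const_nhds
  | succ q ih =>
    rw [pow_succ']
    refine ((h.comp (tendsto_add_atTop_nat q)).mul ih).congr fun n => ?_
    exact div_mul_div_cancel₀ (ha (n + q))

/-- limsup upper bound `|S_l(τ)|/L^{l-1}` when the ratios
`|S_{n+1}(τ)|/|S_n(τ)|` converge to `L > 0`. -/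
theorem avoid_cluster_limsup_upper (m : ℕ) (hm : 2 ≤ m) (τ : Equiv.Perm (Fin m))
    (L : ℝ) (hL : 0 < L)
    (hconv : Filter.Tendsto
      (fun n : ℕ => ((AvoidSet (n + 1) τ).ncard : ℝ) / ((AvoidSet n τ).ncard : ℝ))
      Filter.atTop (nhds L))
    (l : ℕ) (hl : 2 ≤ l) (k : ℕ → ℕ) (hk : ∀ n : ℕ, 1 ≤ k n ∧ k n ≤ n - l + 1) :
    Filter.limsup
      (fun n : ℕ => ((ClusterEvent n l (k n) ∩ AvoidSet n τ).ncard : ℝ) /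
        ((AvoidSet n τ).ncard : ℝ)) Filter.atTop ≤
      ((AvoidSet l τ).ncard : ℝ) / L ^ (l - 1) := by
  have hpos : ∀ n, (0 : ℝ) < (AvoidSet n τ).ncard := fun n => by
    exact_mod_cast (avoidSet_nonempty hm τ n).ncard_pos
  have hshift : Tendsto (fun n => ((AvoidSet (n - l + 1) τ).ncard : ℝ) / (AvoidSet n τ).ncard)
      atTop (𝓝 (L ^ (l - 1))⁻¹) := by
    refine Tendsto.congr' ?_ (((tendsto_div_add_of_tendsto_succ_div (fun n => (hpos n).ne')
      hconv (l - 1)).inv₀ (pow_pos hL _).ne').comp (tendsto_sub_atTop_nat (l - 1)))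
    filter_upwards [eventually_ge_atTop l] with n hn
    rw [comp_apply, inv_div, Nat.sub_add_cancel (by omega : l - 1 ≤ n),
      show n - (l - 1) = n - l + 1 by omega]
  have hbound := tendsto_const_nhds (x := ((AvoidSet l τ).ncard : ℝ)) |>.mul hshift
  rw [← div_eq_mul_inv] at hbound
  refine (limsup_le_limsup ?_ (isCoboundedUnder_le_of_le atTop fun n => by positivity)
    hbound.isBoundedUnder_le).trans_eq hbound.limsup_eq
  filter_upwards [eventually_ge_atTop l] with n hn
  rw [← mul_div_assoc]
  gcongr
  exact_mod_cast ncard_clusterEvent_inter_avoidSet_le τ (by omega) hn (hk n).1 (hk n).2
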